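/- arXiv:1605.02730 — 2 statements merged into one kernel-verified Lean document; each statement's English description precedes it below -/
import Mathlib

section
/- There exists an infinite subset Z of the dyadic tree T that satisfies the tree separation condition (for some constant c > 0) and the tree weak simple condition (for some constant C > 0), has finite associated mass ∑_{z∈Z} 1/d(z) < ∞, and yet fails the simple condition: for every C' > 0 there exists α ∈ T with ∑_{z∈Z, z≥α} 1/d(z) > C'/d(α). -/
/- There is an infinite Z ⊆ T, tree separated and weak simple, with finite
associated mass, which nevertheless fails the simple condition. -/

noncomputable section

open scoped ENNReal

/-- The dyadic tree: vertices are finite binary strings; the root is `[]`,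
the predecessor of `α ≠ []` is `α.dropLast`, and the children of `α` are
`α ++ [false]` and `α ++ [true]`; `α ≤ β` is the prefix order `α <+: β`. -/
abbrev Vtx := List Bool

/-- `d(α)` = (length of α) + 1. -/
def tdepth (α : Vtx) : ℕ := α.length + 1

/-- The longest common prefix `α ∧ β`. -/
def treeMeet : Vtx → Vtx → Vtx
  | [], _ => []
  | _, [] => []
  | a :: as, b :: bs => if a = b then a :: treeMeet as bs else []

/-- The tree distance `d(α,β) = d(α) + d(β) - 2d(α∧β)`. -/
def tdist (α β : Vtx) : ℕ :=
  (α.length - (treeMeet α β).length) + (β.length - (treeMeet α β).length)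

/-- The tree separation condition with constant `c`: `d(z,w) ≥ c·d(z)` for all
distinct `z, w ∈ Z`. -/
def treeSep (Z : Set Vtx) (c : ℝ) : Prop :=
  ∀ z ∈ Z, ∀ w ∈ Z, z ≠ w → c * (tdepth z : ℝ) ≤ (tdist z w : ℝ)

/-- The Dirichlet energy `∑_{β≠o} |Δf(β)|²` of `f : T → ℝ`
(the term at the root vanishes since `[].dropLast = []`). -/
def treeEnergy (f : Vtx → ℝ) : ℝ≥0∞ :=
  ∑' β : Vtx, ENNReal.ofReal ((f β - f β.dropLast) ^ 2)

/-- The tree capacity condition with constant `C`: for every `α ∈ Z`,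
`inf {∑_{β≠o} |Δf(β)|² : f(α) = 1, f = 0 on Z∖{α}} ≤ C/d(α)`. -/
def treeCapCond (Z : Set Vtx) (C : ℝ) : Prop :=
  ∀ α ∈ Z,
    (⨅ f : {f : Vtx → ℝ // f α = 1 ∧ ∀ γ ∈ Z, γ ≠ α → f γ = 0}, treeEnergy f.1) ≤
      ENNReal.ofReal (C / (tdepth α : ℝ))

/-- Membership in the discrete Dirichlet space `B₂(T)`. -/
def memB2T (f : Vtx → ℂ) : Prop :=
  Summable (fun β : Vtx => ‖f β - f β.dropLast‖ ^ 2)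

/-- `Z` is an onto interpolating sequence for `B₂(T)`: every `ξ` on `Z` with
`∑_{z∈Z} |ξ(z)|²/d(z) < ∞` extends to some `f ∈ B₂(T)`. -/
def ontoInterpTree (Z : Set Vtx) : Prop :=
  ∀ ξ : Vtx → ℂ, Summable (fun z : Z => ‖ξ z.1‖ ^ 2 / (tdepth z.1 : ℝ)) →
    ∃ f : Vtx → ℂ, memB2T f ∧ ∀ z ∈ Z, f z = ξ z

/-- `Ih(α) = ∑_{β ≤ α} h(β)`, the sum over the prefixes of `α`. -/
def Isum (h : Vtx → ℝ) (α : Vtx) : ℝ :=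
  ∑ k ∈ Finset.range (α.length + 1), h (α.take k)

/-- The condenser capacity `Cap(E,F) = inf {∑_x |h(x)|² : Ih = 1 on E, Ih = 0 on F}`. -/
def treeCap (E F : Set Vtx) : ℝ≥0∞ :=
  ⨅ h : {h : Vtx → ℝ // (∀ x ∈ E, Isum h x = 1) ∧ ∀ x ∈ F, Isum h x = 0},
    ∑' x : Vtx, ENNReal.ofReal ((h.1 x) ^ 2)

/-- `γ(z,Z) = Cap({z}, Z∖{z})`. -/
def treeGamma (z : Vtx) (Z : Set Vtx) : ℝ≥0∞ := treeCap {z} (Z \ {z})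

/-- The points of `Z` above `α` with an unobstructed view of `α`. -/
def weakSet (Z : Set Vtx) (α : Vtx) : Set Vtx :=
  {β | β ∈ Z ∧ α <+: β ∧ ¬∃ γ ∈ Z, (α <+: γ ∧ α ≠ γ) ∧ (γ <+: β ∧ γ ≠ β)}

/-- The tree weak simple condition with constant `C`. -/
def treeWeakSimple (Z : Set Vtx) (C : ℝ) : Prop :=
  ∀ α : Vtx,
    (∑' β : weakSet Z α, ((tdepth β.1 : ℝ≥0∞))⁻¹) ≤ ENNReal.ofReal (C / (tdepth α : ℝ))

-- auxiliary lemmas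
open List in
lemma tm_nil_right (x : Vtx) : treeMeet x [] = [] := by cases x <;> rfl

open List in
lemma tm_prefix_left : ∀ x y : Vtx, treeMeet x y <+: x
  | [], _ => by simp [treeMeet]
  | (a :: as), [] => by simp [treeMeet]
  | (a :: as), (b :: bs) => by
      by_cases h : a = b
      · simpa [treeMeet, h] using tm_prefix_left as bs
      · simp [treeMeet, h]

open List in
lemma tm_prefix_right : ∀ x y : Vtx, treeMeet x y <+: y
  | [], _ => by simp [treeMeet]
  | (a :: as), [] => by simp [treeMeet]
  | (a :: as), (b :: bs) => by
      by_cases h : a = b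
      · subst h; simpa [treeMeet] using tm_prefix_right as bs
      · simp [treeMeet, h]

open List in
lemma tm_common : ∀ x y z : Vtx, x <+: y → x <+: z → x <+: treeMeet y z
  | [], _, _, _, _ => by simp
  | (a :: as), y, z, hy, hz => by
      match y, z with
      | (b :: bs), (c :: cs) =>
        rw [List.cons_prefix_cons] at hy hz
        obtain ⟨rfl, hy⟩ := hy
        obtain ⟨rfl, hz⟩ := hz
        simpa [treeMeet] using tm_common as bs cs hy hz
      | [], _ => exact absurd hy (by simp)
      | (b :: bs), [] => exact absurd hz (by simp)

open List in
lemma tm_append : ∀ u x y : Vtx, treeMeet (u ++ x) (u ++ y) = u ++ treeMeet x y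
  | [], _, _ => by simp
  | (a :: as), x, y => by simp [treeMeet, tm_append as x y]
/-- depth profile -/
def LL (k : ℕ) : ℕ := 2 ^ k * (k + 1) * (k + 2)

lemma LL_pos (k : ℕ) : 0 < LL k := by unfold LL; positivity

lemma LL_two_mul (k : ℕ) : 2 * LL k ≤ LL (k + 1) := by
  have h : (k + 1) * (k + 2) ≤ (k + 2) * (k + 3) := by nlinarith
  calc 2 * LL k = 2 ^ (k+1) * ((k + 1) * (k + 2)) := by rw [LL]; ring
    _ ≤ 2 ^ (k+1) * ((k + 2) * (k + 3)) := Nat.mul_le_mul_left _ h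
    _ = LL (k + 1) := by rw [LL]; ring

lemma LL_lt (k : ℕ) : LL k < LL (k + 1) :=
  lt_of_lt_of_le (by have := LL_pos k; omega) (LL_two_mul k)

lemma LL_mono : StrictMono LL := strictMono_nat_of_lt_succ LL_lt

/-- the embedding of index strings into the tree -/
def blk (i : ℕ) (b : Bool) : Vtx := b :: List.replicate (LL (i+1) - (LL i + 1)) false

def eAux : ℕ → List Bool → Vtx
  | _, [] => []
  | i, b :: s => blk i b ++ eAux (i+1) s

def eV (s : List Bool) : Vtx := List.replicate (LL 0) false ++ eAux 0 s

lemma blk_length (i : ℕ) (b : Bool) : (blk i b).length + LL i = LL (i + 1) := by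
  have := LL_lt i
  simp [blk]; omega

lemma eAux_length : ∀ (s : List Bool) (i : ℕ), (eAux i s).length + LL i = LL (i + s.length)
  | [], i => by simp [eAux]
  | b :: s, i => by
      have h1 := blk_length i b
      have h2 := eAux_length s (i + 1)
      simp only [eAux, List.length_append, List.length_cons]
      have h3 : i + (s.length + 1) = (i + 1) + s.length := by omega
      rw [h3]; omega

lemma eV_length (s : List Bool) : (eV s).length = LL s.length := by
  have h := eAux_length s 0
  rw [Nat.zero_add] at h
  simp only [eV, List.length_append, List.length_replicate]
  omega

lemma tdepth_eV (s : List Bool) : tdepth (eV s) = LL s.length + 1 := by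
  rw [tdepth, eV_length]

lemma eAux_append : ∀ (s t : List Bool) (i : ℕ),
    eAux i (s ++ t) = eAux i s ++ eAux (i + s.length) t
  | [], t, i => by simp [eAux]
  | b :: s, t, i => by
      have h : i + (b :: s).length = (i + 1) + s.length := by simp; omega
      rw [List.cons_append, h]
      simp only [eAux, eAux_append s t (i+1), List.append_assoc]

lemma eV_append (s t : List Bool) : eV (s ++ t) = eV s ++ eAux s.length t := by
  simp [eV, eAux_append s t 0, List.append_assoc]

lemma eV_prefix_of_prefix {s t : List Bool} (h : s <+: t) : eV s <+: eV t := by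
  obtain ⟨r, rfl⟩ := h
  rw [eV_append]
  exact List.prefix_append _ _

lemma tm_eV (s t : List Bool) : treeMeet (eV s) (eV t) = eV (treeMeet s t) := by
  obtain ⟨v, hv⟩ := tm_prefix_left s t
  obtain ⟨w, hw⟩ := tm_prefix_right s t
  set u := treeMeet s t with hu
  rw [← hv, ← hw, eV_append, eV_append, tm_append]
  suffices h : treeMeet (eAux u.length v) (eAux u.length w) = [] by simp [h]
  cases v with
  | nil => simp [eAux, treeMeet]
  | cons b v' => cases w with
    | nil => simp [eAux, tm_nil_right]
    | cons c w' =>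
      have hbc : b ≠ c := by
        rintro rfl
        have h1 : u ++ [b] <+: s := by rw [← hv]; exact ⟨v', by simp⟩
        have h2 : u ++ [b] <+: t := by rw [← hw]; exact ⟨w', by simp⟩
        have h3 := tm_common _ _ _ h1 h2
        rw [← hu] at h3
        have := h3.length_le
        simp at this
      show treeMeet (blk u.length b ++ _) (blk u.length c ++ _) = []
      simp [blk, treeMeet, hbc]
open List in
lemma tm_eq_of_prefix : ∀ {x y : Vtx}, x <+: y → treeMeet x y = x
  | [], _, _ => by simp [treeMeet]
  | (a :: as), y, h => by
      match y with
      | [] => exact absurd h (by simp)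
      | (b :: bs) =>
        rw [List.cons_prefix_cons] at h
        obtain ⟨rfl, h⟩ := h
        simp [treeMeet, tm_eq_of_prefix h]

lemma eV_prefix_iff {s t : List Bool} : eV s <+: eV t ↔ s <+: t := by
  refine ⟨fun h => ?_, eV_prefix_of_prefix⟩
  have h1 : treeMeet (eV s) (eV t) = eV s := tm_eq_of_prefix h
  rw [tm_eV] at h1
  have h2 : (treeMeet s t).length = s.length := by
    have := congrArg List.length h1
    rw [eV_length, eV_length] at this
    exact LL_mono.injective this
  have h3 : treeMeet s t = s := (tm_prefix_left s t).eq_of_length h2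
  rw [← h3]
  exact tm_prefix_right s t

lemma eV_injective : Function.Injective eV := by
  intro s t h
  have h1 : s <+: t := eV_prefix_iff.mp (h ▸ List.prefix_refl _)
  have h2 : t <+: s := eV_prefix_iff.mp (h ▸ List.prefix_refl _)
  exact h1.eq_of_length (le_antisymm h1.length_le h2.length_le)

lemma tdist_eV (s t : List Bool) :
    tdist (eV s) (eV t)
      = (LL s.length - LL (treeMeet s t).length) + (LL t.length - LL (treeMeet s t).length) := by
  rw [tdist, tm_eV, eV_length, eV_length, eV_length]

lemma sep_nat {s t : List Bool} (h : s ≠ t) :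
    tdepth (eV s) ≤ 4 * tdist (eV s) (eV t) := by
  rw [tdepth_eV, tdist_eV]
  set m := (treeMeet s t).length with hm
  have hms : m ≤ s.length := (tm_prefix_left s t).length_le
  have hmt : m ≤ t.length := (tm_prefix_right s t).length_le
  have hpos := LL_pos m
  rcases Nat.lt_or_ge m s.length with hlt | hge
  · -- m < |s|
    have h1 : LL m ≤ LL (s.length - 1) := LL_mono.monotone (by omega)
    have h2 : 2 * LL (s.length - 1) ≤ LL s.length := by
      have := LL_two_mul (s.length - 1)
      have hs : s.length - 1 + 1 = s.length := by omega
      rwa [hs] at this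
    have := LL_mono.monotone hms
    omega
  · -- m = |s|, so s <+: t and |t| > |s|
    have hms' : m = s.length := le_antisymm hms hge
    have hst : treeMeet s t = s := (tm_prefix_left s t).eq_of_length (by omega)
    have h4 : s <+: t := hst ▸ tm_prefix_right s t
    have hne : s.length ≠ t.length := by
      intro hl
      exact h (h4.eq_of_length hl)
    have h5 : s.length + 1 ≤ t.length := by omega
    have h6 : LL (s.length + 1) ≤ LL t.length := LL_mono.monotone h5
    have h7 : 2 * LL s.length ≤ LL (s.length + 1) := LL_two_mul _
    have := LL_mono.monotone hms
    omega
lemma tsum_listBool (g : ℕ → ℝ≥0∞) :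
    ∑' u : List Bool, g u.length = ∑' n : ℕ, 2 ^ n * g n := by
  rw [← Equiv.tsum_eq (List.equivSigmaTuple (α := Bool)).symm (fun u => g u.length)]
  have h : ∀ p : Σ n, Fin n → Bool,
      g ((List.equivSigmaTuple (α := Bool)).symm p).length = g p.1 := by
    rintro ⟨n, f⟩
    simp [List.equivSigmaTuple]
  calc ∑' p : Σ n, Fin n → Bool, g ((List.equivSigmaTuple (α := Bool)).symm p).length
      = ∑' p : Σ n, Fin n → Bool, g p.1 := by exact tsum_congr h
    _ = ∑' n : ℕ, ∑' _f : Fin n → Bool, g n := ENNReal.tsum_sigma' _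
    _ = ∑' n : ℕ, 2 ^ n * g n := by
        refine tsum_congr fun n => ?_
        rw [tsum_fintype]
        simp [Finset.card_univ, mul_comm]
lemma tsum_range_eV (f : Vtx → ℝ≥0∞) :
    ∑' z : (Set.range eV), f z.1 = ∑' s : List Bool, f (eV s) := by
  rw [← Equiv.tsum_eq (Equiv.ofInjective eV eV_injective) (fun z => f z.1)]
  exact tsum_congr fun s => by simp

lemma mass_ne_top : (∑' z : (Set.range eV), ((tdepth z.1 : ℝ≥0∞))⁻¹) ≠ ⊤ := by
  have h0 : (∑' z : (Set.range eV), ((tdepth z.1 : ℝ≥0∞))⁻¹)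
      = ∑' s : List Bool, ((tdepth (eV s) : ℝ≥0∞))⁻¹ := tsum_range_eV (fun v => ((tdepth v : ℝ≥0∞))⁻¹)
  have h1 : ∀ s : List Bool, ((tdepth (eV s) : ℝ≥0∞))⁻¹
      = (fun n => ((LL n + 1 : ℕ) : ℝ≥0∞)⁻¹) s.length := fun s => by rw [tdepth_eV]
  rw [h0, tsum_congr h1, tsum_listBool (fun n => ((LL n + 1 : ℕ) : ℝ≥0∞)⁻¹)]
  have h2 : ∀ n : ℕ, (2:ℝ≥0∞) ^ n * ((LL n + 1 : ℕ) : ℝ≥0∞)⁻¹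
      ≤ ENNReal.ofReal (1 / ((n:ℝ) + 1) ^ 2) := by
    intro n
    have hb : (2:ℕ) ^ n * (n + 1) ^ 2 ≤ LL n + 1 := by
      have h3 : (2:ℕ) ^ n * (n+1)^2 ≤ 2 ^ n * ((n+1)*(n+2)) := by
        apply Nat.mul_le_mul_left; nlinarith
      have hLL : LL n = 2 ^ n * ((n+1)*(n+2)) := by rw [LL]; ring
      omega
    have hinv : ((LL n + 1 : ℕ) : ℝ≥0∞)⁻¹ ≤ (((2:ℕ) ^ n * (n + 1) ^ 2 : ℕ) : ℝ≥0∞)⁻¹ :=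
      ENNReal.inv_le_inv.mpr (by exact_mod_cast Nat.cast_le.mpr hb)
    calc (2:ℝ≥0∞) ^ n * ((LL n + 1 : ℕ) : ℝ≥0∞)⁻¹
        ≤ (2:ℝ≥0∞) ^ n * (((2:ℕ) ^ n * (n + 1) ^ 2 : ℕ) : ℝ≥0∞)⁻¹ := mul_le_mul_right hinv _
      _ = ENNReal.ofReal (1 / ((n:ℝ) + 1) ^ 2) := by
          push_cast
          have ht : (2:ℝ≥0∞) ^ n ≠ ⊤ := ENNReal.pow_ne_top ENNReal.ofNat_ne_top
          have h2z : (2:ℝ≥0∞) ^ n ≠ 0 := by positivity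
          rw [ENNReal.mul_inv (Or.inl h2z) (Or.inl ht)]
          rw [← mul_assoc, ENNReal.mul_inv_cancel h2z ht, one_mul]
          rw [one_div, ENNReal.ofReal_inv_of_pos (by positivity)]
          congr 1
          rw [ENNReal.ofReal_pow (by positivity)]
          congr 1
          rw [ENNReal.ofReal_add (by positivity) zero_le_one, ENNReal.ofReal_one,
            ENNReal.ofReal_natCast]
  have hsum : Summable (fun n : ℕ => 1 / ((n:ℝ) + 1) ^ 2) := by
    have h4 := (summable_nat_add_iff (f := fun n : ℕ => 1 / (n:ℝ) ^ 2) 1).mpr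
      (Real.summable_one_div_nat_pow.mpr one_lt_two)
    exact h4.congr fun n => by push_cast; ring
  have hle : ∑' n : ℕ, (2:ℝ≥0∞) ^ n * ((LL n + 1 : ℕ) : ℝ≥0∞)⁻¹
      ≤ ENNReal.ofReal (∑' n : ℕ, 1 / ((n:ℝ) + 1) ^ 2) :=
    calc ∑' n : ℕ, (2:ℝ≥0∞) ^ n * ((LL n + 1 : ℕ) : ℝ≥0∞)⁻¹
      ≤ ∑' n : ℕ, ENNReal.ofReal (1 / ((n:ℝ) + 1) ^ 2) := ENNReal.tsum_le_tsum h2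
    _ = ENNReal.ofReal (∑' n : ℕ, 1 / ((n:ℝ) + 1) ^ 2) :=
        (ENNReal.ofReal_tsum_of_nonneg (fun n => by positivity) hsum).symm
  exact ne_top_of_le_ne_top ENNReal.ofReal_ne_top hle
lemma weakSimple_eV : treeWeakSimple (Set.range eV) 3 := by
  classical
  intro α
  by_cases hex : ∃ s : List Bool, α <+: eV s
  · -- there is a point of Z above α
    have hne : {n : ℕ | ∃ s : List Bool, s.length = n ∧ α <+: eV s}.Nonempty :=
      ⟨hex.choose.length, hex.choose, rfl, hex.choose_spec⟩
    obtain ⟨s₀, hs₀n, hs₀⟩ := Nat.sInf_mem hne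
    have hmin : ∀ t : List Bool, α <+: eV t → s₀.length ≤ t.length := by
      intro t ht
      have h := Nat.sInf_le
        (show t.length ∈ {n : ℕ | ∃ s : List Bool, s.length = n ∧ α <+: eV s} from ⟨t, rfl, ht⟩)
      omega
    have claim1 : ∀ t : List Bool, α <+: eV t → s₀ <+: t := by
      intro t ht
      have hcp : α <+: eV (treeMeet s₀ t) := by
        rw [← tm_eV]; exact tm_common _ _ _ hs₀ ht
      have h1 := hmin _ hcp
      have hp := tm_prefix_left s₀ t
      have h2 := hp.length_le
      have heq : treeMeet s₀ t = s₀ := hp.eq_of_length (by omega)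
      rw [← heq]; exact tm_prefix_right s₀ t
    set F : Finset Vtx := {eV s₀, eV (s₀ ++ [false]), eV (s₀ ++ [true])} with hF
    have claim2 : weakSet (Set.range eV) α ⊆ (↑F : Set Vtx) := by
      rintro β ⟨⟨t, rfl⟩, hpre, hno⟩
      have hst : s₀ <+: t := claim1 t hpre
      obtain ⟨r, rfl⟩ := hst
      match r with
      | [] => simp [hF]
      | [b] => cases b <;> simp [hF]
      | b :: c :: r'' =>
        exfalso
        apply hno
        refine ⟨eV (s₀ ++ [b]), ⟨_, rfl⟩, ⟨?_, ?_⟩, ⟨?_, ?_⟩⟩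
        · exact hs₀.trans (eV_prefix_of_prefix ⟨[b], rfl⟩)
        · intro hcontr
          have h1 : α.length ≤ (eV s₀).length := hs₀.length_le
          have h2 := congrArg List.length hcontr
          rw [eV_length] at h2
          rw [eV_length] at h1
          have h3 : (s₀ ++ [b]).length = s₀.length + 1 := by simp
          rw [h3] at h2
          have := LL_lt s₀.length
          omega
        · exact eV_prefix_of_prefix ⟨c :: r'', by simp⟩
        · intro hcontr
          have h2 := congrArg List.length hcontr
          rw [eV_length, eV_length] at h2
          have h3 := LL_mono.injective h2
          simp at h3
    have hdep : ∀ β ∈ F, ((tdepth β : ℝ≥0∞))⁻¹ ≤ (tdepth α : ℝ≥0∞)⁻¹ := by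
      intro β hβ
      apply ENNReal.inv_le_inv.mpr
      have halen : α.length ≤ LL s₀.length := by
        have := hs₀.length_le
        rwa [eV_length] at this
      have hβlen : LL s₀.length + 1 ≤ tdepth β := by
        simp only [hF, Finset.mem_insert, Finset.mem_singleton] at hβ
        rcases hβ with rfl | rfl | rfl
        · rw [tdepth_eV]
        · rw [tdepth_eV]
          have := LL_mono.monotone (show s₀.length ≤ (s₀ ++ [false]).length by simp)
          omega
        · rw [tdepth_eV]
          have := LL_mono.monotone (show s₀.length ≤ (s₀ ++ [true]).length by simp)
          omega
      have h4 : tdepth α ≤ tdepth β := by rw [tdepth]; omega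
      exact_mod_cast h4
    have hcard : F.card ≤ 3 := by
      refine le_trans (Finset.card_insert_le _ _) ?_
      refine le_trans (Nat.add_le_add_right (Finset.card_insert_le _ _) 1) ?_
      simp
    calc ∑' β : (weakSet (Set.range eV) α), ((tdepth β.1 : ℝ≥0∞))⁻¹
        ≤ ∑' β : (↑F : Set Vtx), ((tdepth β.1 : ℝ≥0∞))⁻¹ :=
          ENNReal.tsum_mono_subtype (fun v => ((tdepth v : ℝ≥0∞))⁻¹) claim2
      _ = ∑ β ∈ F, ((tdepth β : ℝ≥0∞))⁻¹ :=
          Finset.tsum_subtype' F (fun v => ((tdepth v : ℝ≥0∞))⁻¹)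
      _ ≤ ∑ _β ∈ F, ((tdepth α : ℝ≥0∞))⁻¹ := Finset.sum_le_sum hdep
      _ = F.card • ((tdepth α : ℝ≥0∞))⁻¹ := by rw [Finset.sum_const]
      _ ≤ 3 * ((tdepth α : ℝ≥0∞))⁻¹ := by
          rw [nsmul_eq_mul]
          exact mul_le_mul_left (by exact_mod_cast hcard) _
      _ = ENNReal.ofReal (3 / (tdepth α : ℝ)) := by
          have hpos : (0:ℝ) < (tdepth α : ℝ) := by exact_mod_cast Nat.succ_pos α.length
          rw [ENNReal.ofReal_div_of_pos hpos, div_eq_mul_inv,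
            ENNReal.ofReal_natCast]
          norm_num
  · -- no point of Z above α : the weak set is empty
    have hempty : weakSet (Set.range eV) α = ∅ := by
      ext β
      simp only [weakSet, Set.mem_setOf_eq, Set.mem_empty_iff_false, iff_false, not_and]
      rintro ⟨s, rfl⟩ hpre
      exact absurd ⟨s, hpre⟩ hex
    rw [hempty]
    simp
lemma treeSep_eV : treeSep (Set.range eV) (1/4) := by
  rintro z ⟨s, rfl⟩ w ⟨t, rfl⟩ hzw
  have hst : s ≠ t := fun h => hzw (by rw [h])
  have h := sep_nat hst
  have h2 : (tdepth (eV s) : ℝ) ≤ 4 * (tdist (eV s) (eV t) : ℝ) := by exact_mod_cast h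
  linarith

lemma fail_simple : ∀ C' : ℝ, 0 < C' → ∃ α : Vtx,
    ENNReal.ofReal (C' / (tdepth α : ℝ)) <
      ∑' z : {z : Vtx // z ∈ Set.range eV ∧ α <+: z}, ((tdepth z.1 : ℝ≥0∞))⁻¹ := by
  intro C' hC'
  obtain ⟨j, hj⟩ := exists_nat_gt (18 * C')
  set s : List Bool := List.replicate j false with hs
  refine ⟨eV s, ?_⟩
  set M : ℕ := 2 ^ (j+3) * (j+1)^2 with hM
  have hslen : s.length = j := by simp [hs]
  -- the injection of all of `Z` above `eV s` given by extensions of `s`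
  have hi : ∀ u : List Bool,
      eV (s ++ u) ∈ Set.range eV ∧ eV s <+: eV (s ++ u) :=
    fun u => ⟨⟨s ++ u, rfl⟩, eV_prefix_of_prefix ⟨u, rfl⟩⟩
  set i : List Bool → {z : Vtx // z ∈ Set.range eV ∧ eV s <+: z} :=
    fun u => ⟨eV (s ++ u), hi u⟩ with hidef
  have hinj : Function.Injective i := by
    intro u v huv
    have h1 : eV (s ++ u) = eV (s ++ v) := congrArg Subtype.val huv
    have h2 := eV_injective h1
    exact List.append_cancel_left h2
  -- chain of lower bounds
  have step1 : (∑' n : ℕ, 2 ^ n * ((LL (j + n) + 1 : ℕ) : ℝ≥0∞)⁻¹)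
      ≤ ∑' z : {z : Vtx // z ∈ Set.range eV ∧ eV s <+: z}, ((tdepth z.1 : ℝ≥0∞))⁻¹ := by
    rw [← tsum_listBool (fun n => ((LL (j + n) + 1 : ℕ) : ℝ≥0∞)⁻¹)]
    have he : ∀ u : List Bool,
        (fun n => ((LL (j + n) + 1 : ℕ) : ℝ≥0∞)⁻¹) u.length
          = ((tdepth ((i u).1) : ℝ≥0∞))⁻¹ := by
      intro u
      have : tdepth ((i u).1) = LL (j + u.length) + 1 := by
        rw [hidef]
        show tdepth (eV (s ++ u)) = _
        rw [tdepth_eV, List.length_append, hslen]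
      rw [this]
    rw [tsum_congr he]
    exact ENNReal.tsum_comp_le_tsum_of_injective hinj
      (fun z => ((tdepth z.1 : ℝ≥0∞))⁻¹)
  have step2 : (∑ n ∈ Finset.range (j+1), (2:ℝ≥0∞) ^ n * ((LL (j + n) + 1 : ℕ) : ℝ≥0∞)⁻¹)
      ≤ ∑' n : ℕ, 2 ^ n * ((LL (j + n) + 1 : ℕ) : ℝ≥0∞)⁻¹ :=
    ENNReal.sum_le_tsum _
  have step3 : ((j+1 : ℕ) : ℝ≥0∞) * ((M : ℕ) : ℝ≥0∞)⁻¹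
      ≤ ∑ n ∈ Finset.range (j+1), (2:ℝ≥0∞) ^ n * ((LL (j + n) + 1 : ℕ) : ℝ≥0∞)⁻¹ := by
    have hterm : ∀ n ∈ Finset.range (j+1),
        ((M : ℕ) : ℝ≥0∞)⁻¹ ≤ (2:ℝ≥0∞) ^ n * ((LL (j + n) + 1 : ℕ) : ℝ≥0∞)⁻¹ := by
      intro n hn
      have hnj : n ≤ j := by simpa [Nat.lt_succ_iff] using hn
      -- nat inequality : LL (j+n) + 1 ≤ 2^n * M
      have hnat : LL (j + n) + 1 ≤ 2 ^ n * M := by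
        have h1 : LL (j+n) + 1 ≤ 2 * LL (j+n) := by have := LL_pos (j+n); omega
        have h2 : LL (j+n) = 2 ^ (j+n) * ((j+n+1) * (j+n+2)) := by rw [LL]; ring
        have h3 : (j+n+1) * (j+n+2) ≤ (2*(j+1)) * (2*(j+1)) :=
          Nat.mul_le_mul (by omega) (by omega)
        have h4 : 2 * LL (j+n) ≤ 2 * (2 ^ (j+n) * ((2*(j+1)) * (2*(j+1)))) := by
          rw [h2]
          exact Nat.mul_le_mul_left _ (Nat.mul_le_mul_left _ h3)
        have h5 : 2 * (2 ^ (j+n) * ((2*(j+1)) * (2*(j+1)))) = 2 ^ n * M := by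
          rw [hM]
          ring_nf
        omega
      have hcast : ((LL (j + n) + 1 : ℕ) : ℝ≥0∞)⁻¹ ≥ (((2 ^ n * M : ℕ)) : ℝ≥0∞)⁻¹ :=
        ENNReal.inv_le_inv.mpr (by exact_mod_cast hnat)
      have h2z : (2:ℝ≥0∞) ^ n ≠ 0 := by positivity
      have h2t : (2:ℝ≥0∞) ^ n ≠ ⊤ := ENNReal.pow_ne_top ENNReal.ofNat_ne_top
      calc ((M : ℕ) : ℝ≥0∞)⁻¹
          = (2:ℝ≥0∞) ^ n * (((2:ℝ≥0∞) ^ n)⁻¹ * ((M : ℕ) : ℝ≥0∞)⁻¹) := by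
            rw [← mul_assoc, ENNReal.mul_inv_cancel h2z h2t, one_mul]
        _ = (2:ℝ≥0∞) ^ n * (((2 ^ n * M : ℕ)) : ℝ≥0∞)⁻¹ := by
            congr 1
            rw [← ENNReal.mul_inv (Or.inl h2z) (Or.inl h2t)]
            congr 1
            norm_cast
        _ ≤ (2:ℝ≥0∞) ^ n * ((LL (j + n) + 1 : ℕ) : ℝ≥0∞)⁻¹ := mul_le_mul_right hcast _
    calc ((j+1 : ℕ) : ℝ≥0∞) * ((M : ℕ) : ℝ≥0∞)⁻¹
        = ∑ _n ∈ Finset.range (j+1), ((M : ℕ) : ℝ≥0∞)⁻¹ := by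
          rw [Finset.sum_const, Finset.card_range, nsmul_eq_mul]
      _ ≤ _ := Finset.sum_le_sum hterm
  -- the left side is smaller than (j+1)/M
  have hMpos : (0:ℝ) < (M:ℝ) := by positivity
  have hdpos : (0:ℝ) < ((LL j + 1 : ℕ) : ℝ) := by positivity
  have hreal : C' / ((LL j + 1 : ℕ) : ℝ) < ((j+1 : ℕ) : ℝ) / (M:ℝ) := by
    rw [div_lt_div_iff₀ hdpos hMpos]
    have hMr : (M:ℝ) = 8 * 2^j * ((j:ℝ)+1)^2 := by
      rw [hM]; push_cast; ring
    have hLr : ((LL j : ℕ) : ℝ) = 2^j * ((j:ℝ)+1) * ((j:ℝ)+2) := by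
      rw [LL]; push_cast; ring
    have h8 : 8 * C' < (j:ℝ) + 2 := by linarith
    have hp1 : (0:ℝ) < 2^j := by positivity
    have hp2 : (0:ℝ) < ((j:ℝ)+1)^2 := by positivity
    push_cast
    push_cast at hMr hLr
    nlinarith [mul_pos hp1 hp2, mul_lt_mul_of_pos_right h8 (mul_pos hp1 hp2)]
  have hlt : ENNReal.ofReal (C' / ((LL j + 1 : ℕ) : ℝ))
      < ((j+1 : ℕ) : ℝ≥0∞) * ((M : ℕ) : ℝ≥0∞)⁻¹ := by
    have hrhs : ((j+1 : ℕ) : ℝ≥0∞) * ((M : ℕ) : ℝ≥0∞)⁻¹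
        = ENNReal.ofReal (((j+1 : ℕ) : ℝ) / (M:ℝ)) := by
      rw [div_eq_mul_inv, ENNReal.ofReal_mul (by positivity),
        ENNReal.ofReal_inv_of_pos hMpos, ENNReal.ofReal_natCast, ENNReal.ofReal_natCast]
    rw [hrhs]
    exact ENNReal.ofReal_lt_ofReal_iff (by positivity) |>.mpr hreal
  have : ENNReal.ofReal (C' / ((LL j + 1 : ℕ) : ℝ))
      < ∑' z : {z : Vtx // z ∈ Set.range eV ∧ eV s <+: z}, ((tdepth z.1 : ℝ≥0∞))⁻¹ :=
    lt_of_lt_of_le hlt (le_trans step3 (le_trans step2 step1))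
  have hdd : tdepth (eV s) = LL j + 1 := by rw [tdepth_eV, hslen]
  rw [hdd]
  exact_mod_cast this

theorem weakSimple_finite_mass_but_not_simple :
    ∃ Z : Set Vtx, Z.Infinite ∧
      (∃ c : ℝ, 0 < c ∧ treeSep Z c) ∧
      (∃ C : ℝ, 0 < C ∧ treeWeakSimple Z C) ∧
      (∑' z : Z, ((tdepth z.1 : ℝ≥0∞))⁻¹) ≠ ⊤ ∧
      ∀ C' : ℝ, 0 < C' → ∃ α : Vtx,
        ENNReal.ofReal (C' / (tdepth α : ℝ)) <
          ∑' z : {z : Vtx // z ∈ Z ∧ α <+: z}, ((tdepth z.1 : ℝ≥0∞))⁻¹ := by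
  exact ⟨Set.range eV, Set.infinite_range_of_injective eV_injective,
    ⟨1/4, by norm_num, treeSep_eV⟩, ⟨3, by norm_num, weakSimple_eV⟩,
    mass_ne_top, fail_simple⟩

end
end

section
/- (Separation plus finite measure does not imply interpolation.) For every M > 0 there exist a finite subset Z of the dyadic tree T and a point z₀ ∈ Z such that Z satisfies the tree separation condition with constant 1/2, the total mass satisfies ∑_{z∈Z} 1/d(z) ≤ 2, and yet Cap({z₀}, Z∖{z₀}) ≥ M/d(z₀). Consequently Z fails the tree capacity condition with constant M. -/
/- Separation plus finite measure do not imply interpolation: for every M > 0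
there is a finite Z ⊆ T with a point z₀ ∈ Z such that Z is 1/2-separated, has total
mass at most 2, yet Cap({z₀}, Z∖{z₀}) ≥ M/d(z₀); consequently Z fails the tree
capacity condition with constant M. -/

noncomputable section

open scoped ENNReal

namespace SepAux

lemma treeMeet_append (p : Vtx) {a b : Bool} (u v : Vtx) (hab : a ≠ b) :
    treeMeet (p ++ a :: u) (p ++ b :: v) = p := by
  induction p with
  | nil => simp [treeMeet, hab]
  | cons x xs ih => simpa [treeMeet] using ih

/-- The branch point `w_j = 0^(n-j) 1 0^(n+j-1)`. -/
def wpt (n j : ℕ) : Vtx :=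
  List.replicate (n - j) false ++ true :: List.replicate (n + j - 1) false

lemma wpt_length {n j : ℕ} (h1 : 1 ≤ j) (h2 : j ≤ n) : (wpt n j).length = 2 * n := by
  simp only [wpt, List.length_append, List.length_replicate, List.length_cons]
  omega

lemma repl_split {n j : ℕ} (h1 : 1 ≤ j) (h2 : j ≤ n) :
    List.replicate n false
      = List.replicate (n - j) false ++ false :: List.replicate (j - 1) false := by
  rw [show false :: List.replicate (j-1) false = List.replicate j false from by
        rw [← List.replicate_succ]; congr 1; omega,
      List.replicate_append_replicate]
  congr 1; omega

lemma meet_z0_wpt {n j : ℕ} (h1 : 1 ≤ j) (h2 : j ≤ n) :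
    treeMeet (List.replicate n false) (wpt n j) = List.replicate (n - j) false := by
  rw [repl_split h1 h2, wpt]
  exact treeMeet_append _ _ _ (by decide)

lemma meet_wpt_z0 {n j : ℕ} (h1 : 1 ≤ j) (h2 : j ≤ n) :
    treeMeet (wpt n j) (List.replicate n false) = List.replicate (n - j) false := by
  rw [repl_split h1 h2, wpt]
  exact treeMeet_append _ _ _ (by decide)

lemma wpt_split {n j k : ℕ} (hjk : j < k) (hk : k ≤ n) :
    ∃ v : Vtx, wpt n j = List.replicate (n - k) false ++ false :: v := by
  refine ⟨List.replicate (k - j - 1) false ++ true :: List.replicate (n + j - 1) false, ?_⟩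
  rw [wpt, show n - j = (n - k) + (k - j) from by omega, ← List.replicate_append_replicate,
    List.append_assoc]
  congr 2
  rw [show k - j = (k - j - 1) + 1 from by omega, List.replicate_succ]
  simp

lemma meet_wpt_wpt {n j k : ℕ} (hjk : j < k) (hk : k ≤ n) :
    treeMeet (wpt n k) (wpt n j) = List.replicate (n - k) false ∧
    treeMeet (wpt n j) (wpt n k) = List.replicate (n - k) false := by
  obtain ⟨v, hv⟩ := wpt_split hjk hk
  constructor
  · rw [hv, wpt]
    exact treeMeet_append _ _ _ (by decide)
  · rw [hv, wpt]
    exact treeMeet_append _ _ _ (by decide)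

lemma tw_repl (m : ℕ) (rest : Vtx) :
    (List.replicate m false ++ true :: rest).takeWhile (fun b => !b)
      = List.replicate m false := by
  induction m with
  | zero => simp [List.takeWhile]
  | succ m ih => simpa [List.replicate_succ, List.takeWhile] using ih

lemma wpt_take {n j k : ℕ} (hj : j ≤ n) (h : n - j + 1 ≤ k) :
    (wpt n j).take k = List.replicate (n - j) false
      ++ true :: (List.replicate (n + j - 1) false).take (k - (n - j) - 1) := by
  rw [wpt, List.take_append,
    List.take_of_length_le (by rw [List.length_replicate]; omega)]
  congr 1
  rw [List.length_replicate, show k - (n-j) = (k - (n-j) - 1) + 1 from by omega]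
  simp

lemma wpt_take_first_true {n j k : ℕ} (hj : j ≤ n) (h : n - j + 1 ≤ k) :
    ((wpt n j).take k).takeWhile (fun b => !b) = List.replicate (n - j) false := by
  rw [wpt_take hj h, tw_repl]

lemma Isum_split (h : Vtx → ℝ) (x : Vtx) (m : ℕ) (hm : m ≤ x.length) :
    Isum h x = Isum h (x.take m) + ∑ k ∈ Finset.Ico (m+1) (x.length+1), h (x.take k) := by
  have h1 : Isum h (x.take m) = ∑ k ∈ Finset.Ico 0 (m+1), h (x.take k) := by
    unfold Isum
    rw [List.length_take, min_eq_left hm, Finset.range_eq_Ico]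
    refine Finset.sum_congr rfl fun k hk => ?_
    rw [List.take_take, min_eq_left (by simp at hk; omega)]
  have h2 : Isum h x = ∑ k ∈ Finset.Ico 0 (m+1), h (x.take k)
      + ∑ k ∈ Finset.Ico (m+1) (x.length+1), h (x.take k) := by
    unfold Isum
    rw [Finset.range_eq_Ico, Finset.sum_Ico_consecutive _ (Nat.zero_le _) (by omega)]
  rw [h2, h1]

end SepAux

set_option maxHeartbeats 1000000 in
open SepAux in
theorem sep_finite_mass_not_interpolating :
    ∀ M : ℝ, 0 < M → ∃ Z : Set Vtx, ∃ z₀ ∈ Z, Z.Finite ∧ treeSep Z (1 / 2) ∧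
      (∑' z : Z, ((tdepth z.1 : ℝ≥0∞))⁻¹) ≤ 2 ∧
      ENNReal.ofReal (M / (tdepth z₀ : ℝ)) ≤ treeCap {z₀} (Z \ {z₀}) ∧
      ¬ (∀ α ∈ Z, treeCap {α} (Z \ {α}) ≤ ENNReal.ofReal (M / (tdepth α : ℝ))) := by
  intro M hM
  set J : ℕ := ⌈8 * M⌉₊ + 1 with hJdef
  have hJ1 : 1 ≤ J := Nat.le_add_left 1 _
  have hJpos : (0:ℝ) < J := by exact_mod_cast hJ1
  have hMJ : 8 * M < (J : ℝ) := by
    calc 8 * M ≤ (⌈8 * M⌉₊ : ℝ) := Nat.le_ceil _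
    _ < J := by exact_mod_cast Nat.lt_succ_self _
  set n : ℕ := J * J with hndef
  have hJn : J ≤ n := Nat.le_mul_of_pos_left J hJ1
  have hn1 : 1 ≤ n := le_trans hJ1 hJn
  set z₀ : Vtx := List.replicate n false with hz₀def
  have hz₀len : z₀.length = n := List.length_replicate
  have hz₀depth : (tdepth z₀ : ℝ) = n + 1 := by
    simp [tdepth, hz₀len]
  have hwne : ∀ j, 1 ≤ j → j ≤ J → wpt n j ≠ z₀ := by
    intro j h1 h2 heq
    have := congrArg List.length heq
    rw [wpt_length h1 (le_trans h2 hJn), hz₀len] at this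
    omega
  set ZF : Finset Vtx := insert z₀ ((Finset.Icc 1 J).image (wpt n)) with hZFdef
  have hz₀mem : z₀ ∈ ZF := Finset.mem_insert_self _ _
  have hwmem : ∀ j, 1 ≤ j → j ≤ J → wpt n j ∈ ZF := by
    intro j h1 h2
    exact Finset.mem_insert_of_mem (Finset.mem_image_of_mem _ (Finset.mem_Icc.mpr ⟨h1, h2⟩))
  -- the key lower bound on the capacity
  have hcapkey : ENNReal.ofReal (1 / (8 * J) : ℝ) ≤ treeCap {z₀} ((↑ZF : Set Vtx) \ {z₀}) := by
    rw [treeCap]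
    refine le_iInf fun g => ?_
    obtain ⟨h, h1, h0⟩ := g
    have hz1 : Isum h z₀ = 1 := h1 z₀ rfl
    have hw0 : ∀ j, 1 ≤ j → j ≤ J → Isum h (wpt n j) = 0 := by
      intro j hj1 hj2
      exact h0 _ ⟨hwmem j hj1 hj2, hwne j hj1 hj2⟩
    set t : ℕ → ℝ := fun j => Isum h (List.replicate (n - j) false) with htdef
    have main : ∃ S : Finset Vtx, (1 / (8 * J) : ℝ) ≤ ∑ x ∈ S, (h x) ^ 2 := by
      by_cases hc : ∀ j ∈ Finset.Icc 1 J, 1/2 < |t j|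
      · -- Case A : all branches are charged
        set B : ℕ → Finset Vtx :=
          fun j => (Finset.Ico (n - j + 1) (2*n + 1)).image ((wpt n j).take ·) with hBdef
        refine ⟨(Finset.Icc 1 J).biUnion B, ?_⟩
        have hdisj : (↑(Finset.Icc 1 J) : Set ℕ).PairwiseDisjoint B := by
          intro j hj k hk hjk
          simp only [Finset.coe_Icc, Set.mem_Icc] at hj hk
          simp only [Function.onFun]
          rw [Finset.disjoint_left]
          intro x hxj hxk
          simp only [hBdef, Finset.mem_image, Finset.mem_Ico] at hxj hxk
          obtain ⟨a, ha, hax⟩ := hxj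
          obtain ⟨b, hb, hbx⟩ := hxk
          have e1 : x.takeWhile (fun b => !b) = List.replicate (n - j) false := by
            rw [← hax]; exact wpt_take_first_true (le_trans hj.2 hJn) (by omega)
          have e2 : x.takeWhile (fun b => !b) = List.replicate (n - k) false := by
            rw [← hbx]; exact wpt_take_first_true (le_trans hk.2 hJn) (by omega)
          have := congrArg List.length (e1.symm.trans e2)
          simp only [List.length_replicate] at this
          have hj2 := le_trans hj.2 hJn
          have hk2 := le_trans hk.2 hJn
          omega
        rw [Finset.sum_biUnion hdisj]
        have hbranch : ∀ j ∈ Finset.Icc 1 J, (1 / (8 * n) : ℝ) ≤ ∑ x ∈ B j, (h x) ^ 2 := by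
          intro j hj
          rw [Finset.mem_Icc] at hj
          have hjn : j ≤ n := le_trans hj.2 hJn
          have hwlen : (wpt n j).length = 2 * n := wpt_length hj.1 hjn
          have htake0 : (wpt n j).take (n - j) = List.replicate (n - j) false := by
            rw [wpt, List.take_append_of_le_length (by rw [List.length_replicate]),
              List.take_of_length_le (by rw [List.length_replicate])]
          have hsplit := Isum_split h (wpt n j) (n - j) (by omega)
          rw [hw0 j hj.1 hj.2, htake0, hwlen] at hsplit
          -- 0 = t j + Σ
          have hsum : ∑ k ∈ Finset.Ico (n - j + 1) (2*n + 1), h ((wpt n j).take k) = - t j := by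
            rw [htdef]; dsimp only; linarith [hsplit]
          have hcard : (Finset.Ico (n - j + 1) (2*n + 1)).card = n + j := by
            rw [Nat.card_Ico]; omega
          have hCS := sq_sum_le_card_mul_sum_sq
            (s := Finset.Ico (n - j + 1) (2*n + 1)) (f := fun k => h ((wpt n j).take k))
          rw [hsum, hcard] at hCS
          have htj : 1/2 < |t j| := hc j (Finset.mem_Icc.mpr hj)
          have htj2 : (1:ℝ)/4 < (t j)^2 := by
            have := sq_abs (t j)
            nlinarith
          have hBsum : ∑ x ∈ B j, (h x) ^ 2
              = ∑ k ∈ Finset.Ico (n - j + 1) (2*n + 1), (h ((wpt n j).take k)) ^ 2 := by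
            rw [hBdef]
            refine Finset.sum_image fun a ha b hb hab => ?_
            have := congrArg List.length hab
            rw [List.length_take, List.length_take, hwlen] at this
            simp only [Finset.mem_coe, Finset.mem_Ico] at ha hb
            omega
          rw [hBsum]
          have hnj : ((n:ℝ) + j) ≤ 2 * n := by
            have : (j:ℝ) ≤ n := by exact_mod_cast hjn
            linarith
          have hpos : (0:ℝ) < n := by exact_mod_cast hn1
          have hterm : (0:ℝ) ≤ ∑ k ∈ Finset.Ico (n - j + 1) (2*n + 1),
              (h ((wpt n j).take k)) ^ 2 :=
            Finset.sum_nonneg fun _ _ => sq_nonneg _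
          rw [neg_pow, neg_one_sq, one_mul] at hCS
          push_cast at hCS
          rw [div_le_iff₀ (by positivity)]
          nlinarith
        calc (1 / (8 * J) : ℝ) = J * (1 / (8 * n)) := by
              rw [hndef]; push_cast; field_simp
        _ = ∑ _j ∈ Finset.Icc 1 J, (1 / (8 * n) : ℝ) := by
              rw [Finset.sum_const, Nat.card_Icc]; simp
        _ ≤ ∑ j ∈ Finset.Icc 1 J, ∑ x ∈ B j, (h x) ^ 2 :=
              Finset.sum_le_sum hbranch
      · -- Case B : some t j is small, the path from α_j to z₀ is charged
        push_neg at hc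
        obtain ⟨j, hjmem, hjt⟩ := hc
        rw [Finset.mem_Icc] at hjmem
        have hjn : j ≤ n := le_trans hjmem.2 hJn
        refine ⟨(Finset.Ico (n - j + 1) (n + 1)).image (z₀.take ·), ?_⟩
        have htake0 : z₀.take (n - j) = List.replicate (n - j) false := by
          rw [hz₀def, List.take_replicate]; congr 1; omega
        have hsplit := Isum_split h z₀ (n - j) (by omega)
        rw [hz1, htake0, hz₀len] at hsplit
        have hsum : ∑ k ∈ Finset.Ico (n - j + 1) (n + 1), h (z₀.take k) = 1 - t j := by
          rw [htdef]; dsimp only; linarith [hsplit]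
        have hcard : (Finset.Ico (n - j + 1) (n + 1)).card = j := by
          rw [Nat.card_Ico]; omega
        have hCS := sq_sum_le_card_mul_sum_sq
          (s := Finset.Ico (n - j + 1) (n + 1)) (f := fun k => h (z₀.take k))
        rw [hsum, hcard] at hCS
        have hlow : (1:ℝ)/4 ≤ (1 - t j)^2 := by
          have h1 : t j ≤ 1/2 := le_trans (le_abs_self _) hjt
          nlinarith
        have hSsum : ∑ x ∈ (Finset.Ico (n - j + 1) (n + 1)).image (z₀.take ·), (h x) ^ 2
            = ∑ k ∈ Finset.Ico (n - j + 1) (n + 1), (h (z₀.take k)) ^ 2 := by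
          refine Finset.sum_image fun a ha b hb hab => ?_
          have := congrArg List.length hab
          rw [List.length_take, List.length_take, hz₀len] at this
          simp only [Finset.mem_coe, Finset.mem_Ico] at ha hb
          omega
        rw [hSsum]
        have hjR : (0:ℝ) < j := by exact_mod_cast hjmem.1
        have hjJ : (j:ℝ) ≤ J := by exact_mod_cast hjmem.2
        have hterm : (0:ℝ) ≤ ∑ k ∈ Finset.Ico (n - j + 1) (n + 1), (h (z₀.take k)) ^ 2 :=
          Finset.sum_nonneg fun _ _ => sq_nonneg _
        push_cast at hCS
        rw [div_le_iff₀ (by positivity)]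
        nlinarith
    obtain ⟨S, hS⟩ := main
    calc ENNReal.ofReal (1 / (8 * J) : ℝ) ≤ ENNReal.ofReal (∑ x ∈ S, (h x) ^ 2) :=
          ENNReal.ofReal_le_ofReal hS
    _ = ∑ x ∈ S, ENNReal.ofReal ((h x) ^ 2) :=
          ENNReal.ofReal_sum_of_nonneg fun _ _ => sq_nonneg _
    _ ≤ ∑' x : Vtx, ENNReal.ofReal ((h x) ^ 2) := ENNReal.sum_le_tsum S
  have hMlt : ENNReal.ofReal (M / (tdepth z₀ : ℝ)) < ENNReal.ofReal (1 / (8 * J) : ℝ) := by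
    rw [ENNReal.ofReal_lt_ofReal_iff (by positivity)]
    rw [hz₀depth, div_lt_div_iff₀ (by positivity) (by positivity)]
    have : (n:ℝ) = (J:ℝ) * J := by rw [hndef]; push_cast; ring
    nlinarith
  refine ⟨(↑ZF : Set Vtx), z₀, hz₀mem, ZF.finite_toSet, ?_, ?_, le_of_lt hMlt |>.trans hcapkey,
    fun H => (hMlt.trans_le hcapkey).not_ge (H z₀ hz₀mem)⟩
  · -- separation
    intro z hz w hw hzw
    have hdepthw : ∀ j, 1 ≤ j → j ≤ J → ((tdepth (wpt n j) : ℝ)) = 2*n + 1 := by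
      intro j h1 h2
      simp [tdepth, wpt_length h1 (le_trans h2 hJn)]
    simp only [hZFdef, Finset.coe_insert, Set.mem_insert_iff, Finset.coe_image,
      Set.mem_image, Finset.mem_coe, Finset.mem_Icc] at hz hw
    rcases hz with hz | ⟨j, hj, rfl⟩
    · subst hz
      rcases hw with hw | ⟨j, hj, rfl⟩
      · exact absurd hw.symm hzw
      · -- z = z₀, w = wpt n j
        have hjn : j ≤ n := le_trans hj.2 hJn
        have hmeet : (treeMeet z₀ (wpt n j)).length = n - j := by
          rw [hz₀def, meet_z0_wpt hj.1 hjn, List.length_replicate]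
        have hdist : tdist z₀ (wpt n j) = n + 2*j := by
          rw [tdist, hmeet, hz₀len, wpt_length hj.1 hjn]; omega
        rw [hdist, hz₀depth]
        have hj1 : (1:ℝ) ≤ j := by exact_mod_cast hj.1
        push_cast
        linarith
    · rcases hw with hw | ⟨k, hk, rfl⟩
      · subst hw
        have hjn : j ≤ n := le_trans hj.2 hJn
        have hmeet : (treeMeet (wpt n j) z₀).length = n - j := by
          rw [hz₀def, meet_wpt_z0 hj.1 hjn, List.length_replicate]
        have hdist : tdist (wpt n j) z₀ = n + 2*j := by
          rw [tdist, hmeet, hz₀len, wpt_length hj.1 hjn]; omega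
        rw [hdist, hdepthw j hj.1 hj.2]
        have hj1 : (1:ℝ) ≤ j := by exact_mod_cast hj.1
        push_cast
        linarith
      · -- both branch points
        have hjn : j ≤ n := le_trans hj.2 hJn
        have hkn : k ≤ n := le_trans hk.2 hJn
        have hjk : j ≠ k := fun hkj => hzw (by rw [hkj])
        have hmeet : (treeMeet (wpt n j) (wpt n k)).length = n - max j k := by
          rcases lt_or_gt_of_ne hjk with hlt | hlt
          · rw [(meet_wpt_wpt hlt hkn).2, List.length_replicate, Nat.max_eq_right (le_of_lt hlt)]
          · rw [(meet_wpt_wpt hlt hjn).1, List.length_replicate, Nat.max_eq_left (le_of_lt hlt)]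
        have hdist : tdist (wpt n j) (wpt n k) = 2*n + 2 * max j k := by
          rw [tdist, hmeet, wpt_length hj.1 hjn, wpt_length hk.1 hkn]
          have : max j k ≤ n := max_le hjn hkn
          omega
        rw [hdist, hdepthw j hj.1 hj.2]
        have hn1R : (1:ℝ) ≤ n := by exact_mod_cast hn1
        push_cast
        have hmax0 : (0:ℝ) ≤ (j:ℝ) ⊔ (k:ℝ) :=
          le_trans (Nat.cast_nonneg j) (le_max_left _ _)
        linarith
  · -- mass bound
    have hinj : ∀ a ∈ Finset.Icc 1 J, ∀ b ∈ Finset.Icc 1 J, wpt n a = wpt n b → a = b := by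
      intro a ha b hb hab
      rw [Finset.mem_Icc] at ha hb
      have e1 : (wpt n a).takeWhile (fun x => !x) = List.replicate (n - a) false :=
        tw_repl _ _
      have e2 : (wpt n b).takeWhile (fun x => !x) = List.replicate (n - b) false :=
        tw_repl _ _
      rw [hab] at e1
      have := congrArg List.length (e1.symm.trans e2)
      simp only [List.length_replicate] at this
      have han := le_trans ha.2 hJn
      have hbn := le_trans hb.2 hJn
      omega
    have hz₀notmem : z₀ ∉ (Finset.Icc 1 J).image (wpt n) := by
      intro hmem
      obtain ⟨j, hj, hje⟩ := Finset.mem_image.mp hmem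
      rw [Finset.mem_Icc] at hj
      exact hwne j hj.1 hj.2 hje
    rw [Finset.tsum_subtype' ZF (fun z => ((tdepth z : ℝ≥0∞))⁻¹), hZFdef,
      Finset.sum_insert hz₀notmem, Finset.sum_image hinj]
    have hterm : ∀ j ∈ Finset.Icc 1 J, ((tdepth (wpt n j) : ℝ≥0∞))⁻¹ = ((2*n+1 : ℕ) : ℝ≥0∞)⁻¹ := by
      intro j hj
      rw [Finset.mem_Icc] at hj
      congr 2
      simp [tdepth, wpt_length hj.1 (le_trans hj.2 hJn)]
    rw [Finset.sum_congr rfl hterm, Finset.sum_const, Nat.card_Icc]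
    have h1 : ((tdepth z₀ : ℝ≥0∞))⁻¹ ≤ 1 := by
      rw [ENNReal.inv_le_one]
      have : (1:ℕ) ≤ tdepth z₀ := Nat.le_add_left 1 _
      exact_mod_cast this
    have h2 : (J + 1 - 1) • ((2*n+1 : ℕ) : ℝ≥0∞)⁻¹ ≤ 1 := by
      rw [nsmul_eq_mul]
      calc (↑(J + 1 - 1) : ℝ≥0∞) * ((2*n+1 : ℕ) : ℝ≥0∞)⁻¹
          ≤ ((2*n+1 : ℕ) : ℝ≥0∞) * ((2*n+1 : ℕ) : ℝ≥0∞)⁻¹ := by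
            gcongr
            have : J + 1 - 1 ≤ 2*n+1 := by omega
            exact_mod_cast this
      _ = 1 := ENNReal.mul_inv_cancel (by exact_mod_cast Nat.succ_ne_zero (2*n))
            (ENNReal.natCast_ne_top _)
    calc ((tdepth z₀ : ℝ≥0∞))⁻¹ + (J + 1 - 1) • ((2*n+1 : ℕ) : ℝ≥0∞)⁻¹ ≤ 1 + 1 :=
          add_le_add h1 h2
    _ = 2 := one_add_one_eq_two

end
end
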